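/- A smooth projective toric variety X_Σ is a Fano variety (i.e., −K_X is ample) if and only if Δ(P) > 0 for every primitive collection P of Σ. -/

import Mathlib

/-!
Statement 5:  A smooth projective toric variety `X_Σ` is Fano (i.e. `-K_X` is ample) if and
only if `Δ(P) > 0` for every primitive collection `P` of `Σ`.

Modelling: the fan is axiomatized in `SmoothCompleteFan`, projectivity in `IsProjective`.
The Fano condition (`IsFano`) is the standard toric criterion for ampleness of
`-K_X = ∑ᵢ Dᵢ`: its support function (taking the value `1` on each minimal ray generator) is
strictly convex.  For a primitive collection `P` with primitive relation
`∑_{i ∈ P} v_i = ∑_{j ∈ σ_P} c_j v_j` (`c_j` positive integers), the degree is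
`Δ(P) = |P| - ∑_j c_j`.  (Since the generators of a cone of a smooth fan are linearly
independent, a representation of `∑_{i ∈ P} v_i` with strictly positive coefficients on a
cone of `Σ` is automatically the primitive relation — the minimal cone `σ_P` is the support
of the coefficients — so it is not necessary to impose minimality of `σ_P` below.)
-/

open Finset

/-- Rational dot product on `Fin n → ℚ`. -/
def dotQ {n : ℕ} (u x : Fin n → ℚ) : ℚ := ∑ k, u k * x k

/-- `InCone v s x`: the point `x` lies in the convex cone generated by the rays `v i`,
`i ∈ s`. -/
def InCone {n d : ℕ} (v : Fin d → Fin n → ℤ) (s : Finset (Fin d)) (x : Fin n → ℚ) : Prop :=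
  ∃ c : Fin d → ℚ, (∀ i, 0 ≤ c i) ∧ (∀ i ∉ s, c i = 0) ∧ ∀ k, x k = ∑ i, c i * (v i k : ℚ)

/-- A smooth complete fan `Σ` in `N_ℝ ≅ ℝⁿ` (lattice `N = ℤⁿ`), i.e. the combinatorial datum
of a smooth complete toric variety `X = X_Σ` of dimension `n`.  A smooth fan is simplicial, so
a cone of `Σ` is recorded by the finite set of (indices of) its minimal generators: `cone s`
means that the rays `v i`, `i ∈ s`, span a cone of `Σ`. -/
structure SmoothCompleteFan (n : ℕ) where
  /-- the number of rays of `Σ` -/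
  d : ℕ
  /-- the minimal generators `v₁, …, v_d` of the rays of `Σ` -/
  v : Fin d → Fin n → ℤ
  /-- `cone s` iff the rays indexed by `s` span a cone of `Σ` -/
  cone : Finset (Fin d) → Prop
  /-- each `v i` is a primitive lattice vector -/
  primitive : ∀ i, ∀ m : ℤ, (∀ k, m ∣ v i k) → IsUnit m
  /-- the rays are pairwise distinct -/
  inj : Function.Injective v
  /-- the zero cone belongs to `Σ` -/
  cone_empty : cone ∅
  /-- every ray belongs to `Σ` -/
  cone_ray : ∀ i, cone {i}
  /-- `Σ` is closed under passing to faces -/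
  cone_mono : ∀ {s t : Finset (Fin d)}, cone t → s ⊆ t → cone s
  /-- every cone is a face of a full-dimensional cone -/
  le_maximal : ∀ s, cone s → ∃ t, cone t ∧ s ⊆ t ∧ t.card = n
  /-- smoothness: the generators of each full-dimensional cone form a basis of `N = ℤⁿ` -/
  smooth : ∀ s, cone s → s.card = n → ∀ x : Fin n → ℤ,
      ∃ c : Fin d → ℤ, (∀ i ∉ s, c i = 0) ∧ ∀ k, x k = ∑ i, c i * v i k
  /-- completeness: the cones of `Σ` cover `N_ℝ` -/
  complete : ∀ x : Fin n → ℚ, ∃ s, cone s ∧ InCone v s x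
  /-- fan condition: two cones of `Σ` meet along their common face -/
  inter : ∀ s t x, cone s → cone t → InCone v s x → InCone v t x → InCone v (s ∩ t) x

namespace SmoothCompleteFan

variable {n : ℕ} (F : SmoothCompleteFan n)

/-- The ray generators viewed as rational vectors. -/
def vQ (i : Fin F.d) : Fin n → ℚ := fun k => (F.v i k : ℚ)

/-- The toric variety `X_Σ` is projective iff `Σ` admits a strictly convex support function,
i.e. iff some divisor `∑ aᵢ Dᵢ` is ample:  on each maximal cone the support function is given
by a linear form `u` with `⟨u, vᵢ⟩ = aᵢ` for the rays of the cone and `⟨u, vⱼ⟩ < aⱼ` for all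
other rays. -/
def IsProjective : Prop :=
  ∃ a : Fin F.d → ℚ, ∀ s, F.cone s → s.card = n →
    ∃ u : Fin n → ℚ, (∀ i ∈ s, dotQ u (F.vQ i) = a i) ∧ ∀ j ∉ s, dotQ u (F.vQ j) < a j

/-- The toric variety `X_Σ` is Fano iff the anticanonical divisor `-K_X = ∑ᵢ Dᵢ` is ample,
i.e. iff its support function (which takes the value `1` on every ray generator) is strictly
convex. -/
def IsFano : Prop :=
  ∀ s, F.cone s → s.card = n →
    ∃ u : Fin n → ℚ, (∀ i ∈ s, dotQ u (F.vQ i) = 1) ∧ ∀ j ∉ s, dotQ u (F.vQ j) < 1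

end SmoothCompleteFan

/-- `P` is a primitive collection of `Σ`: it is not contained in any cone of `Σ` (i.e. does
not span a cone), but each of its proper subsets is. -/
def IsPrimitiveCollection {n : ℕ} (F : SmoothCompleteFan n) (P : Finset (Fin F.d)) : Prop :=
  ¬ F.cone P ∧ ∀ s ⊂ P, F.cone s

/-!
Fano ⇒ positive degrees: on a maximal cone `t ⊇ σ_P` the support function of `-K_X` is a linear
form `u` with `⟨u, vᵢ⟩ = 1` on `t` and `< 1` off `t`.  Pairing `u` with the primitive relation gives
`∑ c_j = ∑_{i ∈ P} ⟨u, vᵢ⟩ < |P|`, because `P` is not contained in `t`.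

Positive degrees ⇒ Fano: in a nonnegative integer combination `∑ mᵢ vᵢ` whose support is not a
cone, pick a primitive collection `P` inside the support and replace `∑_{i ∈ P} vᵢ` by the right
hand side of its primitive relation.  The vector is unchanged and `∑ mᵢ` drops by `Δ(P) > 0`, so
iterating ends at the unique representation on a cone, which therefore has strictly smaller total
coefficient.  Given a maximal cone `s`, let `u` be the linear form equal to `1` on its rays; for
`j ∉ s` write `v_j = ∑_{i ∈ s} bᵢ vᵢ` and apply this to `v_j + ∑ bᵢ⁻ vᵢ = ∑ bᵢ⁺ vᵢ`, getting
`⟨u, v_j⟩ = ∑ bᵢ ≤ 0 < 1`.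
-/

lemma dotQ_eq_dotProduct {n : ℕ} (u x : Fin n → ℚ) : dotQ u x = u ⬝ᵥ x := rfl

namespace SmoothCompleteFan

variable {n : ℕ} (F : SmoothCompleteFan n)

lemma inCone_iff {s : Finset (Fin F.d)} {x : Fin n → ℚ} :
    InCone F.v s x ↔ ∃ c : Fin F.d → ℚ, (∀ i, 0 ≤ c i) ∧ (∀ i ∉ s, c i = 0) ∧
      x = ∑ i, c i • F.vQ i := by
  simp [InCone, funext_iff, Finset.sum_apply, vQ]

lemma exists_int_coeffs {s : Finset (Fin F.d)} (hs : F.cone s) (hcard : s.card = n)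
    (x : Fin n → ℤ) :
    ∃ c : Fin F.d → ℤ, (∀ i ∉ s, c i = 0) ∧ (fun k => (x k : ℚ)) = ∑ i, (c i : ℚ) • F.vQ i := by
  obtain ⟨c, hcs, hx⟩ := F.smooth s hs hcard x
  refine ⟨c, hcs, funext fun k => ?_⟩
  simp [Finset.sum_apply, vQ, hx k]

lemma span_vQ_eq_top {s : Finset (Fin F.d)} (hs : F.cone s) (hcard : s.card = n) :
    Submodule.span ℚ (F.vQ '' s) = ⊤ := by
  rw [eq_top_iff, ← (Pi.basisFun ℚ (Fin n)).span_eq, Submodule.span_le]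
  rintro _ ⟨k, rfl⟩
  obtain ⟨c, hcs, hx⟩ := F.exists_int_coeffs hs hcard (Pi.single k 1)
  have : Pi.basisFun ℚ (Fin n) k = ∑ i ∈ s, (c i : ℚ) • F.vQ i := by
    rw [Finset.sum_subset (subset_univ s) fun i _ hi => by simp [hcs i hi], ← hx]
    ext l
    simp [Pi.single_apply]
  rw [this]
  exact Submodule.sum_mem _ fun i hi =>
    Submodule.smul_mem _ _ (Submodule.subset_span (Set.mem_image_of_mem _ hi))

lemma linearIndepOn_vQ_of_card_eq {s : Finset (Fin F.d)} (hs : F.cone s) (hcard : s.card = n) :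
    LinearIndepOn ℚ F.vQ (s : Set (Fin F.d)) :=
  linearIndependent_of_top_le_span_of_card_eq_finrank
    (by rw [← Set.image_eq_range, F.span_vQ_eq_top hs hcard])
    (by simp only [Finset.coe_sort_coe, Fintype.card_coe, hcard, Module.finrank_fin_fun])

lemma linearIndepOn_vQ {s : Finset (Fin F.d)} (hs : F.cone s) :
    LinearIndepOn ℚ F.vQ (s : Set (Fin F.d)) := by
  obtain ⟨t, ht, hst, htcard⟩ := F.le_maximal s hs
  exact (F.linearIndepOn_vQ_of_card_eq ht htcard).mono (by exact_mod_cast hst)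

lemma coeffs_eq_of_sum_eq {s : Finset (Fin F.d)} (hs : F.cone s) {c c' : Fin F.d → ℚ}
    (hc : ∀ i ∉ s, c i = 0) (hc' : ∀ i ∉ s, c' i = 0)
    (h : ∑ i, c i • F.vQ i = ∑ i, c' i • F.vQ i) : c = c' := by
  have hsum : ∑ i ∈ s, (c - c') i • F.vQ i = 0 := by
    rw [Finset.sum_subset (subset_univ s) fun i _ hi => by simp [hc i hi, hc' i hi]]
    simp [sub_smul, h]
  funext i
  by_cases hi : i ∈ s
  · exact sub_eq_zero.mp (linearIndepOn_finset_iff.mp (F.linearIndepOn_vQ hs) _ hsum i hi)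
  · rw [hc i hi, hc' i hi]

lemma coeffs_eq_of_mem_cones {s t : Finset (Fin F.d)} (hs : F.cone s) (ht : F.cone t)
    {c c' : Fin F.d → ℚ} (hc0 : ∀ i, 0 ≤ c i) (hcs : ∀ i ∉ s, c i = 0)
    (hc'0 : ∀ i, 0 ≤ c' i) (hc't : ∀ i ∉ t, c' i = 0)
    (h : ∑ i, c i • F.vQ i = ∑ i, c' i • F.vQ i) : c = c' := by
  obtain ⟨e, -, hest, he⟩ := F.inCone_iff.mp <| F.inter s t _ hs ht
    (F.inCone_iff.mpr ⟨c, hc0, hcs, rfl⟩) (F.inCone_iff.mpr ⟨c', hc'0, hc't, h⟩)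
  have hce : c = e := F.coeffs_eq_of_sum_eq hs hcs
    (fun i hi => hest i fun h => hi (mem_of_mem_inter_left h)) he
  have hc'e : c' = e := F.coeffs_eq_of_sum_eq ht hc't
    (fun i hi => hest i fun h => hi (mem_of_mem_inter_right h)) (h ▸ he)
  rw [hce, hc'e]

lemma natCoeffs_eq_of_sum_eq {m c : Fin F.d → ℕ} (hm : F.cone {i | m i ≠ 0})
    (hc : F.cone {i | c i ≠ 0})
    (h : ∑ i, m i • F.vQ i = ∑ i, c i • F.vQ i) : m = c := by
  have hcast : (fun i => (m i : ℚ)) = fun i => (c i : ℚ) := by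
    refine F.coeffs_eq_of_mem_cones hm hc (fun i => by positivity) (fun i hi => ?_)
      (fun i => by positivity) (fun i hi => ?_) (by simpa only [Nat.cast_smul_eq_nsmul] using h)
    · simpa using hi
    · simpa using hi
  funext i
  exact_mod_cast congrFun hcast i

lemma exists_natCoeffs_cone (x : Fin n → ℤ) :
    ∃ c : Fin F.d → ℕ, F.cone {i | c i ≠ 0} ∧ (fun k => (x k : ℚ)) = ∑ i, c i • F.vQ i := by
  obtain ⟨s, hs, hx⟩ := F.complete fun k => (x k : ℚ)
  obtain ⟨q, hq0, hqs, hxq⟩ := F.inCone_iff.mp hx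
  obtain ⟨t, ht, hst, htcard⟩ := F.le_maximal s hs
  obtain ⟨z, hzt, hxz⟩ := F.exists_int_coeffs ht htcard x
  have hqz : q = fun i => (z i : ℚ) := F.coeffs_eq_of_sum_eq ht
    (fun i hi => hqs i fun h => hi (hst h)) (fun i hi => by simp [hzt i hi]) (hxq.symm.trans hxz)
  have hz0 : ∀ i, 0 ≤ z i := fun i => by
    have := hq0 i
    simp only [hqz] at this
    exact_mod_cast this
  refine ⟨fun i => (z i).toNat, F.cone_mono hs fun i hi => ?_, ?_⟩
  · by_contra his
    have : z i = 0 := by exact_mod_cast (congrFun hqz i).symm.trans (hqs i his)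
    simp [this] at hi
  · rw [hxq, hqz]
    refine sum_congr rfl fun i _ => ?_
    rw [← Nat.cast_smul_eq_nsmul ℚ]
    congr 1
    simp only
    rw [← Int.cast_natCast, Int.toNat_of_nonneg (hz0 i)]

lemma exists_dotProduct_eq_one {s : Finset (Fin F.d)} (hs : F.cone s) (hcard : s.card = n) :
    ∃ u : Fin n → ℚ, ∀ i ∈ s, u ⬝ᵥ F.vQ i = 1 := by
  have hli := (F.linearIndepOn_vQ hs).linearIndependent
  have hspan : ⊤ ≤ Submodule.span ℚ (Set.range fun i : (s : Set (Fin F.d)) => F.vQ i) := by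
    rw [← Set.image_eq_range, F.span_vQ_eq_top hs hcard]
  let b := Module.Basis.mk hli hspan
  let f : Module.Dual ℚ (Fin n → ℚ) := b.constr ℚ fun _ => (1 : ℚ)
  refine ⟨(dotProductEquiv ℚ (Fin n)).symm f, fun i hi => ?_⟩
  have hb : b ⟨i, mem_coe.mpr hi⟩ = F.vQ i := Module.Basis.mk_apply hli hspan _
  rw [← dotProductEquiv_apply_apply, LinearEquiv.apply_symm_apply, ← hb, b.constr_basis]

lemma exists_isPrimitiveCollection_subset {S : Finset (Fin F.d)} (hS : ¬ F.cone S) :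
    ∃ P ⊆ S, IsPrimitiveCollection F P := by
  obtain ⟨P, hPS, hmin⟩ := exists_minimal_le_of_wellFoundedLT (fun T => ¬ F.cone T) S hS
  exact ⟨P, hPS, hmin.prop, fun T hTP => not_not.mp (hmin.not_prop_of_lt hTP)⟩

def HasPositivePrimitiveDegrees : Prop :=
  ∀ P : Finset (Fin F.d), IsPrimitiveCollection F P →
    ∀ (σP : Finset (Fin F.d)) (c : Fin F.d → ℕ), F.cone σP → (∀ j ∈ σP, 0 < c j) →
      (∀ k, (∑ i ∈ P, F.v i k) = ∑ j ∈ σP, (c j : ℤ) * F.v j k) →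
      0 < (P.card : ℤ) - ∑ j ∈ σP, (c j : ℤ)

variable {F}

theorem IsFano.hasPositivePrimitiveDegrees (hF : F.IsFano) : F.HasPositivePrimitiveDegrees := by
  intro P hP σP c hσP _ hrel
  obtain ⟨t, ht, hσt, htcard⟩ := F.le_maximal σP hσP
  obtain ⟨u, hu_eq, hu_lt⟩ := hF t ht htcard
  simp only [dotQ_eq_dotProduct] at hu_eq hu_lt
  have hrelQ : ∑ i ∈ P, F.vQ i = ∑ j ∈ σP, (c j : ℚ) • F.vQ j := by
    ext k
    simpa [Finset.sum_apply, vQ] using congrArg (Int.cast : ℤ → ℚ) (hrel k)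
  have hdeg : ∑ i ∈ P, u ⬝ᵥ F.vQ i = ∑ j ∈ σP, (c j : ℚ) := by
    rw [← dotProduct_sum, hrelQ, dotProduct_sum]
    refine sum_congr rfl fun j hj => ?_
    rw [dotProduct_smul, hu_eq j (hσt hj), smul_eq_mul, mul_one]
  obtain ⟨i₀, hi₀P, hi₀t⟩ := not_subset.mp fun h => hP.1 (F.cone_mono ht h)
  have hlt : ∑ i ∈ P, u ⬝ᵥ F.vQ i < ∑ i ∈ P, 1 := by
    refine sum_lt_sum (fun i _ => ?_) ⟨i₀, hi₀P, hu_lt i₀ hi₀t⟩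
    by_cases hi : i ∈ t
    exacts [(hu_eq i hi).le, (hu_lt i hi).le]
  rw [hdeg, sum_const, nsmul_one] at hlt
  exact sub_pos.mpr (by exact_mod_cast hlt)

theorem HasPositivePrimitiveDegrees.exists_sum_lt_card (h : F.HasPositivePrimitiveDegrees)
    {P : Finset (Fin F.d)} (hP : IsPrimitiveCollection F P) :
    ∃ p : Fin F.d → ℕ, F.cone {j | p j ≠ 0} ∧
      ∑ i ∈ P, F.vQ i = ∑ j, p j • F.vQ j ∧ ∑ j, p j < P.card := by
  obtain ⟨p, hp, hrel⟩ := F.exists_natCoeffs_cone fun k => ∑ i ∈ P, F.v i k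
  have hrelQ : ∑ i ∈ P, F.vQ i = ∑ j, p j • F.vQ j := by
    rw [← hrel]
    ext k
    simp [Finset.sum_apply, vQ]
  refine ⟨p, hp, hrelQ, ?_⟩
  have hdeg := h P hP _ p hp (fun j hj => Nat.pos_of_ne_zero (mem_filter.mp hj).2) fun k => by
    rw [sum_filter_of_ne fun j _ hj => by simpa using left_ne_zero_of_mul hj]
    have := congrFun hrel k
    simp only [Finset.sum_apply, Pi.smul_apply, vQ] at this
    simp only [nsmul_eq_mul] at this
    exact_mod_cast this
  rw [sum_filter_of_ne fun j _ hj => by simpa using hj] at hdeg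
  zify
  omega

theorem HasPositivePrimitiveDegrees.sum_lt_sum_of_not_cone (h : F.HasPositivePrimitiveDegrees)
    {m c : Fin F.d → ℕ} (hc : F.cone {i | c i ≠ 0})
    (hmc : ∑ i, m i • F.vQ i = ∑ i, c i • F.vQ i) (hm : ¬ F.cone {i | m i ≠ 0}) :
    ∑ i, c i < ∑ i, m i := by
  induction hN : ∑ i, m i using Nat.strong_induction_on generalizing m with
  | _ N ih =>
  obtain ⟨P, hPm, hP⟩ := F.exists_isPrimitiveCollection_subset hm
  obtain ⟨p, -, hrel, hpP⟩ := h.exists_sum_lt_card hP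
  obtain ⟨m₀, rfl⟩ : ∃ m₀ : Fin F.d → ℕ, m = fun i => m₀ i + if i ∈ P then 1 else 0 := by
    refine ⟨fun i => m i - if i ∈ P then 1 else 0, funext fun i => ?_⟩
    by_cases hi : i ∈ P
    · have : m i ≠ 0 := (mem_filter.mp (hPm hi)).2
      simp only [hi, if_true]
      omega
    · simp [hi]
  have hsum : ∑ i, (m₀ i + p i) < N := by
    simp only [← hN, sum_add_distrib, sum_boole, filter_mem_eq_inter, univ_inter,
      Nat.cast_id]
    omega
  have hvec : ∑ i, (m₀ i + p i) • F.vQ i = ∑ i, c i • F.vQ i := by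
    rw [← hmc]
    simp only [add_smul, sum_add_distrib, ← hrel, ite_smul, one_smul, zero_smul, sum_ite_mem,
      univ_inter]
  by_cases hm' : F.cone {i | m₀ i + p i ≠ 0}
  · rwa [← F.natCoeffs_eq_of_sum_eq hm' hc hvec]
  · exact (ih _ hsum hvec hm' rfl).trans hsum

theorem HasPositivePrimitiveDegrees.isFano (h : F.HasPositivePrimitiveDegrees) : F.IsFano := by
  intro s hs hcard
  obtain ⟨u, hu⟩ := F.exists_dotProduct_eq_one hs hcard
  refine ⟨u, hu, fun j hj => ?_⟩
  obtain ⟨b, hbs, hvj⟩ := F.exists_int_coeffs hs hcard (F.v j)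
  change F.vQ j = _ at hvj
  set pos : Fin F.d → ℕ := fun i => (b i).toNat
  set neg : Fin F.d → ℕ := fun i => (-b i).toNat
  have hb : ∀ i, b i = pos i - neg i := fun i => by simp only [pos, neg]; omega
  set m : Fin F.d → ℕ := Pi.single j 1 + neg
  have hvec : ∑ i, m i • F.vQ i = ∑ i, pos i • F.vQ i := by
    have : ∀ i, (b i : ℚ) • F.vQ i = pos i • F.vQ i - neg i • F.vQ i := fun i => by
      rw [Int.cast_smul_eq_zsmul, hb, sub_zsmul, natCast_zsmul, natCast_zsmul, sub_eq_add_neg]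
    simp only [m, Pi.add_apply, add_smul, sum_add_distrib, Pi.single_apply, ite_smul, one_smul,
      zero_smul, sum_ite_eq', mem_univ, if_true, hvj, this, sum_sub_distrib]
    abel
  have hpos : F.cone {i | pos i ≠ 0} := F.cone_mono hs fun i hi =>
    by_contra fun his => by simp [pos, hbs i his] at hi
  have hm : ¬ F.cone {i | m i ≠ 0} := fun hm => by
    have := congrFun (F.natCoeffs_eq_of_sum_eq hm hpos hvec) j
    simp [m, pos, neg, hbs j hj] at this
  have hlt := h.sum_lt_sum_of_not_cone hpos hvec hm
  have hval : u ⬝ᵥ F.vQ j = ∑ i, (b i : ℚ) := by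
    rw [hvj, dotProduct_sum]
    refine sum_congr rfl fun i _ => ?_
    by_cases hi : i ∈ s
    · rw [dotProduct_smul, hu i hi, smul_eq_mul, mul_one]
    · simp [hbs i hi]
  have hbsum : ∑ i, b i < 1 := by
    have : ∑ i, m i = 1 + ∑ i, neg i := by simp [m, sum_add_distrib]
    simp only [hb, sum_sub_distrib, ← Nat.cast_sum]
    omega
  rw [dotQ_eq_dotProduct, hval]
  exact_mod_cast hbsum

end SmoothCompleteFan

theorem isFano_iff_primitive_degrees_positive_general
    {n : ℕ} (F : SmoothCompleteFan n) :
    F.IsFano ↔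
      ∀ P : Finset (Fin F.d), IsPrimitiveCollection F P →
        ∀ (σP : Finset (Fin F.d)) (c : Fin F.d → ℕ),
          F.cone σP →
          (∀ j ∈ σP, 0 < c j) →
          (∀ k, (∑ i ∈ P, F.v i k) = ∑ j ∈ σP, (c j : ℤ) * F.v j k) →
          0 < (P.card : ℤ) - ∑ j ∈ σP, (c j : ℤ) :=
  ⟨SmoothCompleteFan.IsFano.hasPositivePrimitiveDegrees,
    SmoothCompleteFan.HasPositivePrimitiveDegrees.isFano⟩

/-- **A smooth projective toric variety is Fano iff every primitive collection has positive
degree:** `-K_X` ample `↔` `Δ(P) = |P| - ∑_j c_j > 0` for every primitive collection `P`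
with primitive relation `∑_{i ∈ P} v_i = ∑_{j ∈ σ_P} c_j v_j`. -/
theorem isFano_iff_primitive_degrees_positive
    {n : ℕ} (F : SmoothCompleteFan n) (hproj : F.IsProjective) :
    F.IsFano ↔
      ∀ P : Finset (Fin F.d), IsPrimitiveCollection F P →
        ∀ (σP : Finset (Fin F.d)) (c : Fin F.d → ℕ),
          F.cone σP →
          (∀ j ∈ σP, 0 < c j) →
          (∀ k, (∑ i ∈ P, F.v i k) = ∑ j ∈ σP, (c j : ℤ) * F.v j k) →
          0 < (P.card : ℤ) - ∑ j ∈ σP, (c j : ℤ) :=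
  isFano_iff_primitive_degrees_positive_general F
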